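/- arXiv:2403.18763 — 2 statements merged into one kernel-verified Lean document; each statement's English description precedes it below -/
import Mathlib

section
/- (Weight-zero case of the paper's Lemma on rounding the p-saturated filtration.) For every n ≥ 1, every 0 ≤ s ≤ n−1 and every r ≥ 1, one has the equality of subsets of Wₙ(L): p^s·fil^log_{(r−1)p^s} Wₙ(L) = p^s·fil^log_{r·p^s − 1} Wₙ(L), where p^s·S denotes the set of elements p^s x with x ∈ S. -/
/-!
In characteristic `p`, multiplication by `p ^ s` shifts Witt components by `s` and raises them
to the `p ^ s`-th power, so `p ^ s • x` only depends on `x₀, …, x_{n-1-s}`. Replacing the other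
components by `0`, every remaining component `xᵢ` enters `fil^log` with the weight
`p ^ (n-1-i)`, a multiple of `p ^ s`; and a multiple of `p ^ s` that is `> -r p ^ s` is already
`≥ -(r - 1) p ^ s`.
-/

noncomputable section

open scoped Classical

/-- A discretely valued field: a field `L` together with a normalized additive valuation
`v : L → ℤ ∪ {∞}` and a uniformizer `z` (so `v z = 1`).  The valuation ring is
`O = {a : L | 0 ≤ v a}`, with maximal ideal `𝔪 = {a : L | 1 ≤ v a}`. -/
structure DVField (L : Type) [Field L] : Type where
  v : L → WithTop ℤ
  z : L
  v_top : ∀ a : L, v a = ⊤ ↔ a = 0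
  v_mul : ∀ a b : L, v (a * b) = v a + v b
  v_add : ∀ a b : L, min (v a) (v b) ≤ v (a + b)
  v_z : v z = 1

namespace DVField

variable {L : Type} [Field L]

/-- `Wₙ(O) ⊆ Wₙ(L)`: the truncated Witt vectors all of whose components are integral. -/
def WO (D : DVField L) (p n : ℕ) : Set (TruncatedWittVector p n L) :=
  {x | ∀ i : Fin n, 0 ≤ D.v (x.coeff i)}

/-- The Brylinski–Kato filtration
`fil^log_r Wₙ(L) = {(a₀, …, a_{n-1}) | p^{n-1-i} · v(aᵢ) ≥ -r for all i}`. -/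
def filLog (D : DVField L) (p r n : ℕ) : Set (TruncatedWittVector p n L) :=
  {x | ∀ i : Fin n, (↑(-(r : ℤ)) : WithTop ℤ) ≤ p ^ (n - 1 - (i : ℕ)) • D.v (x.coeff i)}

end DVField

/-- The Verschiebung `V : Wₙ(L) → W_{n+1}(L)`, shifting components. -/
def wV {p : ℕ} {L : Type} [Field L] {n : ℕ} (x : TruncatedWittVector p n L) :
    TruncatedWittVector p (n + 1) L :=
  TruncatedWittVector.mk p fun i =>
    if h : (i : ℕ) = 0 then 0 else x.coeff ⟨(i : ℕ) - 1, by have := i.isLt; omega⟩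

/-- The iterated Verschiebung `V^{n-m} : W_m(L) → Wₙ(L)` (for `m ≤ n`), given by shifting
components by `n - m`. -/
def wVit {p : ℕ} {L : Type} [Field L] {m n : ℕ} (x : TruncatedWittVector p m L) :
    TruncatedWittVector p n L :=
  TruncatedWittVector.mk p fun i =>
    if h : n - m ≤ (i : ℕ) ∧ (i : ℕ) - (n - m) < m then x.coeff ⟨(i : ℕ) - (n - m), h.2⟩ else 0

/-- The restriction `R : W_{n+1}(L) → Wₙ(L)`, dropping the last component. -/
def wR {p : ℕ} {L : Type} [Field L] {n : ℕ} (x : TruncatedWittVector p (n + 1) L) :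
    TruncatedWittVector p n L :=
  TruncatedWittVector.mk p fun i => x.coeff i.castSucc

/-- The iterated restriction `R^{m-n} : W_m(L) → Wₙ(L)` (for `n ≤ m`), keeping the first `n`
components. -/
def wRes {p : ℕ} {L : Type} [Field L] {m n : ℕ} (x : TruncatedWittVector p m L) :
    TruncatedWittVector p n L :=
  TruncatedWittVector.mk p fun i => if h : (i : ℕ) < m then x.coeff ⟨(i : ℕ), h⟩ else 0

/-- The Frobenius `F : W_{n+1}(L) → Wₙ(L)` in characteristic `p`:
componentwise `p`-th power followed by restriction. -/
def wF {p : ℕ} {L : Type} [Field L] {n : ℕ} (x : TruncatedWittVector p (n + 1) L) :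
    TruncatedWittVector p n L :=
  TruncatedWittVector.mk p fun i => x.coeff i.castSucc ^ p

/-- The Teichmüller lift `[a] = (a, 0, …, 0)`. -/
def wT (p : ℕ) {L : Type} [Field L] (n : ℕ) (a : L) : TruncatedWittVector p n L :=
  TruncatedWittVector.mk p fun i => if (i : ℕ) = 0 then a else 0

/-- The map `p̲ : Wₙ(L) → W_{n+1}(L)`: lift to length `n+1` (by appending a zero component)
and multiply by `p`. -/
def wP {p : ℕ} [Fact p.Prime] {L : Type} [Field L] {n : ℕ} (x : TruncatedWittVector p n L) :
    TruncatedWittVector p (n + 1) L :=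
  p • (wRes x : TruncatedWittVector p (n + 1) L)

namespace DVField

variable {L : Type} [Field L]

/-- The Kato–Matsuda filtration
`fil_r Wₙ(L) = fil^log_{r-1} Wₙ(L) + V^{n-m}(fil^log_r W_m(L))` where `m = min(v_p(r), n)`,
and `fil_0 Wₙ(L) = Wₙ(O)`. -/
def filKM (D : DVField L) (p : ℕ) [Fact p.Prime] (r n : ℕ) :
    Set (TruncatedWittVector p n L) :=
  if r = 0 then D.WO p n
  else {x | ∃ a ∈ D.filLog p (r - 1) n,
    ∃ b ∈ D.filLog p r (min (padicValNat p r) n), x = a + wVit b}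

/-- The `p`-saturation `Fil^p_r Wₙ(L) = Σ_{s=0}^{n-1} p^s · fil_{r·p^s} Wₙ(L)`. -/
def FilP (D : DVField L) (p : ℕ) [Fact p.Prime] (r n : ℕ) :
    Set (TruncatedWittVector p n L) :=
  {x | ∃ f : Fin n → TruncatedWittVector p n L,
      (∀ s : Fin n, f s ∈ D.filKM p (r * p ^ (s : ℕ)) n) ∧
      x = ∑ s : Fin n, p ^ (s : ℕ) • f s}

end DVField

theorem WithTop.nsmul_top {α : Type*} [AddMonoid α] {k : ℕ} (hk : k ≠ 0) :
    k • (⊤ : WithTop α) = ⊤ := by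
  obtain ⟨k, rfl⟩ := Nat.exists_eq_succ_of_ne_zero hk
  rw [succ_nsmul, WithTop.add_top]

theorem neg_sub_one_mul_le_nsmul_of_neg_mul_sub_one_le {P r : ℕ} (hP : 0 < P) {b : WithTop ℤ}
    (h : (↑(-((r * P - 1 : ℕ) : ℤ)) : WithTop ℤ) ≤ P • b) :
    (↑(-(((r - 1) * P : ℕ) : ℤ)) : WithTop ℤ) ≤ P • b := by
  induction b using WithTop.recTopCoe with
  | top => rw [WithTop.nsmul_top hP.ne']; exact le_top
  | coe c =>
    rw [← WithTop.coe_nsmul, WithTop.coe_le_coe, nsmul_eq_mul] at h ⊢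
    rcases r with _ | r
    · simpa using h
    · have hrP : 1 ≤ (r + 1) * P := Nat.one_le_iff_ne_zero.mpr (by positivity)
      push_cast [Nat.cast_sub hrP] at h ⊢
      have hc : -(r : ℤ) ≤ c := by nlinarith
      nlinarith

namespace TruncatedWittVector

variable {p : ℕ} [Fact p.Prime] {R : Type*} [CommRing R] [CharP R p] {n : ℕ}

theorem coeff_pow_smul (s : ℕ) (x : TruncatedWittVector p n R) (i : Fin n) :
    (p ^ s • x).coeff i =
      if (i : ℕ) < s then 0 else x.coeff ⟨i - s, by omega⟩ ^ p ^ s := by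
  have hx : p ^ s • x = WittVector.truncateFun n (x.out * (p : WittVector p R) ^ s) := by
    rw [WittVector.truncateFun_mul, truncateFun_out, WittVector.truncateFun_pow,
      WittVector.truncateFun_natCast, nsmul_eq_mul, mul_comm, Nat.cast_pow]
  rw [hx, WittVector.coeff_truncateFun]
  split_ifs with h
  · exact WittVector.mul_pow_charP_coeff_zero _ h
  · rw [← coeff_out]
    convert WittVector.mul_pow_charP_coeff_succ x.out (m := i - s) (n := s) using 2
    omega

theorem pow_smul_eq_pow_smul_of_coeff_eq {s : ℕ} {x y : TruncatedWittVector p n R}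
    (h : ∀ i : Fin n, (i : ℕ) < n - s → x.coeff i = y.coeff i) : p ^ s • x = p ^ s • y := by
  ext i
  rw [coeff_pow_smul, coeff_pow_smul]
  split_ifs with hi
  · rfl
  · rw [h _ (by simp only; omega)]

end TruncatedWittVector

namespace DVField

variable {L : Type} [Field L] (D : DVField L) {p : ℕ}

theorem v_zero : D.v 0 = ⊤ := (D.v_top 0).2 rfl

theorem filLog_mono {r r' n : ℕ} (h : r ≤ r') : D.filLog p r n ⊆ D.filLog p r' n :=
  fun _ hx i => le_trans (WithTop.coe_le_coe.2 (neg_le_neg (mod_cast h))) (hx i)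

theorem exists_mem_filLog_pow_smul_eq [Fact p.Prime] [CharP L p] {n s r : ℕ}
    {x : TruncatedWittVector p n L} (hx : x ∈ D.filLog p (r * p ^ s - 1) n) :
    ∃ y ∈ D.filLog p ((r - 1) * p ^ s) n, p ^ s • y = p ^ s • x := by
  have hp : 0 < p := (Fact.out : p.Prime).pos
  refine ⟨TruncatedWittVector.mk p fun j => if (j : ℕ) < n - s then x.coeff j else 0,
    fun j => ?_, TruncatedWittVector.pow_smul_eq_pow_smul_of_coeff_eq fun i hi => by simp [hi]⟩
  rw [TruncatedWittVector.coeff_mk]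
  split_ifs with hj
  · obtain ⟨t, ht⟩ : ∃ t, n - 1 - (j : ℕ) = s + t := ⟨n - 1 - j - s, by omega⟩
    have hxj := hx j
    rw [ht, pow_add, mul_nsmul'] at hxj ⊢
    exact neg_sub_one_mul_le_nsmul_of_neg_mul_sub_one_le (Nat.pow_pos hp) hxj
  · rw [v_zero, WithTop.nsmul_top (Nat.pow_pos hp).ne']
    exact le_top

end DVField

theorem statement3_general (p : ℕ) [Fact p.Prime] (L : Type) [Field L] [CharP L p]
    (D : DVField L) (n : ℕ) (s : ℕ) (r : ℕ) :
    (fun x : TruncatedWittVector p n L => p ^ s • x) '' D.filLog p ((r - 1) * p ^ s) n =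
      (fun x : TruncatedWittVector p n L => p ^ s • x) '' D.filLog p (r * p ^ s - 1) n := by
  have hps : 1 ≤ p ^ s := Nat.one_le_pow _ _ (Fact.out : p.Prime).pos
  refine (Set.image_mono (D.filLog_mono ?_)).antisymm ?_
  · rw [Nat.sub_mul, one_mul]
    omega
  · rintro _ ⟨x, hx, rfl⟩
    exact D.exists_mem_filLog_pow_smul_eq hx

/-- (Weight-zero rounding lemma.)  For every `n ≥ 1`, every `0 ≤ s ≤ n-1` and
every `r ≥ 1`, `p^s · fil^log_{(r-1)p^s} Wₙ(L) = p^s · fil^log_{r·p^s - 1} Wₙ(L)` as subsets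
of `Wₙ(L)`. -/
theorem statement3 (p : ℕ) [Fact p.Prime] (L : Type) [Field L] [CharP L p]
    (D : DVField L) (n : ℕ) (hn : 1 ≤ n) (s : ℕ) (hs : s ≤ n - 1) (r : ℕ) (hr : 1 ≤ r) :
    (fun x : TruncatedWittVector p n L => p ^ s • x) '' D.filLog p ((r - 1) * p ^ s) n =
      (fun x : TruncatedWittVector p n L => p ^ s • x) '' D.filLog p (r * p ^ s - 1) n :=
  statement3_general p L D n s r
end
end

section
/- (Explicit presentation of the Brylinski–Kato filtration modulo integral Witt vectors.) Assume O admits a coefficient field, i.e. a subfield K ⊆ O mapping isomorphically onto the residue field κ. Then for every r ≥ 1 and n ≥ 1, every a ∈ fil^log_r Wₙ(L) can be written as a = b + Σ_{α} V^{j_α}([μ_α · z^{i_α}]) (a finite sum), with b ∈ Wₙ(O), μ_α ∈ K, 0 ≤ j_α ≤ n−1, and integers i_α satisfying −r ≤ i_α · p^{n−1−j_α} < 0. -/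
noncomputable section

open scoped Classical

namespace DVField

variable {L : Type} [Field L]

/-- The valuation ring `O` is henselian: every monic polynomial with integral coefficients
having an integral approximate root at which the derivative is a unit has an integral
actual root refining it. -/
def IsHenselian (D : DVField L) : Prop :=
  ∀ f : Polynomial L, f.Monic → (∀ i : ℕ, 0 ≤ D.v (f.coeff i)) →
    ∀ a₀ : L, 0 ≤ D.v a₀ → 1 ≤ D.v (f.eval a₀) →
      D.v ((Polynomial.derivative f).eval a₀) = 0 →
        ∃ a : L, 0 ≤ D.v a ∧ f.eval a = 0 ∧ 1 ≤ D.v (a - a₀)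

/-- `K` is a coefficient field for the valuation ring `O`: a subfield of `L` contained in `O`
mapping isomorphically onto the residue field `κ = O/𝔪` (surjectivity onto `κ` suffices, since
a subfield of `O` automatically injects into `κ`). -/
def IsCoeffField (D : DVField L) (K : Subfield L) : Prop :=
  (∀ a ∈ K, 0 ≤ D.v a) ∧ (∀ a : L, 0 ≤ D.v a → ∃ μ ∈ K, 1 ≤ D.v (a - μ))

end DVField

/-!
Give the variable `X (i, l)` of the Witt addition and negation polynomials the weight `p ^ l`;
these polynomials are then weighted homogeneous of degree `p ^ l`, so for all `c, B` the Witt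
vectors `x` with `c • v (x l) ≥ -B p ^ l` form a subgroup, and for `c = p ^ (n - 1)`, `B = r` it
lifts `fil^log_r Wₙ(L)`. Since `K` is a coefficient field, the zeroth coefficient of such an `x`
is `u + Σ μ z ^ i` with `u` integral, `μ ∈ K` and `v (x 0) ≤ i < 0`. Subtracting
`[u] + Σ [μ z ^ i]` stays in the subgroup and kills the zeroth coefficient, leaving `V y` with `y`
in the subgroup for `(c, B p)`, and induction on `n` decomposes `y`.
-/

namespace MvPolynomial.IsWeightedHomogeneous

variable {σ τ R : Type*} [CommSemiring R]

theorem rename {f : σ → τ} {w : τ → ℕ} {φ : MvPolynomial σ R} {m : ℕ}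
    (h : φ.IsWeightedHomogeneous (w ∘ f) m) :
    (MvPolynomial.rename f φ).IsWeightedHomogeneous w m := by
  intro d hd
  obtain ⟨u, rfl, hu⟩ := coeff_rename_ne_zero f φ d hd
  rw [← h hu, Finsupp.weight_apply, Finsupp.weight_apply]
  exact Finsupp.sum_mapDomain_index (by simp) (fun _ _ _ => add_smul _ _ _)

theorem bind₁ {w : σ → ℕ} {w' : τ → ℕ} {c : ℕ} {f : σ → MvPolynomial τ R}
    (hf : ∀ i, (f i).IsWeightedHomogeneous w' (w i * c)) {φ : MvPolynomial σ R} {m : ℕ}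
    (hφ : φ.IsWeightedHomogeneous w m) :
    (MvPolynomial.bind₁ f φ).IsWeightedHomogeneous w' (m * c) := by
  conv_lhs => rw [as_sum φ]
  rw [map_sum]
  refine IsWeightedHomogeneous.sum _ _ _ fun d hd => ?_
  rw [bind₁_monomial]
  have hdeg : ∑ i ∈ d.support, d i • (w i * c) = m * c := by
    have hw := hφ (mem_support_iff.mp hd)
    rw [Finsupp.weight_apply, Finsupp.sum] at hw
    rw [← hw, Finset.sum_mul]
    exact Finset.sum_congr rfl fun i _ => by simp only [smul_eq_mul]; ring
  have hprod := IsWeightedHomogeneous.prod d.support (fun i => f i ^ d i) _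
    (fun i _ => (hf i).pow (d i))
  rw [hdeg] at hprod
  simpa using (isWeightedHomogeneous_C w' (coeff d φ)).mul hprod

theorem of_map {S : Type*} [CommSemiring S] {f : R →+* S} (hf : Function.Injective f)
    {w : σ → ℕ} {φ : MvPolynomial σ R} {m : ℕ}
    (h : (map f φ).IsWeightedHomogeneous w m) : φ.IsWeightedHomogeneous w m := by
  intro d hd
  exact h (by rwa [coeff_map, ne_eq, map_eq_zero_iff f hf])

end MvPolynomial.IsWeightedHomogeneous

section WittHomogeneity

open MvPolynomial

variable (p : ℕ)

theorem wittPolynomial_isWeightedHomogeneous (R : Type*) [CommRing R] (k : ℕ) :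
    (wittPolynomial p R k).IsWeightedHomogeneous (fun j => p ^ j) (p ^ k) := by
  refine IsWeightedHomogeneous.sum _ _ _ fun i hi => isWeightedHomogeneous_monomial _ _ _ ?_
  rw [Finsupp.weight_apply, Finsupp.sum_single_index (by simp), smul_eq_mul, ← pow_add,
    Nat.sub_add_cancel (Nat.lt_succ_iff.mp (Finset.mem_range.mp hi))]

theorem xInTermsOfW_isWeightedHomogeneous (R : Type*) [CommRing R] [Invertible (p : R)] (n : ℕ) :
    (xInTermsOfW p R n).IsWeightedHomogeneous (fun j => p ^ j) (p ^ n) := by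
  induction n using Nat.strong_induction_on with
  | _ n ih =>
  rw [xInTermsOfW_eq]
  have hsum : (∑ i ∈ Finset.range n, C ((p : R) ^ i) * xInTermsOfW p R i ^ p ^ (n - i)
      : MvPolynomial ℕ R).IsWeightedHomogeneous (fun j => p ^ j) (p ^ n) := by
    refine IsWeightedHomogeneous.sum _ _ _ fun i hi => ?_
    have hi := Finset.mem_range.mp hi
    have h := ((ih i hi).pow (p ^ (n - i))).C_mul ((p : R) ^ i)
    rwa [smul_eq_mul, ← pow_add, Nat.sub_add_cancel hi.le] at h
  have h := ((isWeightedHomogeneous_X R _ n).sub hsum).mul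
    (isWeightedHomogeneous_C (fun j => p ^ j) (⅟(p : R) ^ n))
  rwa [add_zero] at h

variable [Fact p.Prime]

theorem wittStructureInt_isWeightedHomogeneous {ι : Type*} {Φ : MvPolynomial ι ℤ}
    (hΦ : Φ.IsHomogeneous 1) (n : ℕ) :
    (wittStructureInt p Φ n).IsWeightedHomogeneous (fun x : ι × ℕ => p ^ x.2) (p ^ n) := by
  refine IsWeightedHomogeneous.of_map (Int.castRingHom ℚ).injective_int ?_
  rw [map_wittStructureInt, wittStructureRat]
  have hW : ∀ k, (MvPolynomial.bind₁ (fun i => rename (Prod.mk i) (wittPolynomial p ℚ k))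
      (map (Int.castRingHom ℚ) Φ)).IsWeightedHomogeneous (fun x : ι × ℕ => p ^ x.2)
        (p ^ k) := by
    intro k
    have hren : ∀ i : ι, (rename (Prod.mk i) (wittPolynomial p ℚ k)).IsWeightedHomogeneous
        (fun x : ι × ℕ => p ^ x.2) (1 * p ^ k) := fun i => by
      rw [one_mul]
      exact IsWeightedHomogeneous.rename (wittPolynomial_isWeightedHomogeneous p ℚ k)
    simpa using IsWeightedHomogeneous.bind₁ hren (hΦ.map (Int.castRingHom ℚ))
  simpa using (xInTermsOfW_isWeightedHomogeneous p ℚ n).bind₁ (c := 1) (by simpa using hW)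

theorem wittAdd_isWeightedHomogeneous (n : ℕ) :
    (WittVector.wittAdd p n).IsWeightedHomogeneous (fun x : Fin 2 × ℕ => p ^ x.2) (p ^ n) :=
  wittStructureInt_isWeightedHomogeneous p ((isHomogeneous_X ℤ 0).add (isHomogeneous_X ℤ 1)) n

theorem wittNeg_isWeightedHomogeneous (n : ℕ) :
    (WittVector.wittNeg p n).IsWeightedHomogeneous (fun x : Fin 1 × ℕ => p ^ x.2) (p ^ n) :=
  wittStructureInt_isWeightedHomogeneous p (isHomogeneous_X ℤ 0).neg n

end WittHomogeneity

namespace AddValuation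

open WittVector

variable {R : Type*} [CommRing R] (v : AddValuation R (WithTop ℤ))

theorem map_intCast_nonneg (k : ℤ) : 0 ≤ v (k : R) := by
  have hnat : ∀ n : ℕ, 0 ≤ v (n : R) := by
    intro n
    induction n with
    | zero => simp [v.map_zero]
    | succ n ih => rw [Nat.cast_succ]; exact v.map_le_add ih v.map_one.ge
  cases k with
  | ofNat n => simpa using hnat n
  | negSucc n => rw [Int.cast_negSucc, v.map_neg]; exact hnat _

theorem le_nsmul_map_add {c : ℕ} {t : WithTop ℤ} {x y : R} (hx : t ≤ c • v x)
    (hy : t ≤ c • v y) : t ≤ c • v (x + y) := by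
  rcases v.map_add' x y with h | h
  · exact hx.trans (nsmul_le_nsmul_right h c)
  · exact hy.trans (nsmul_le_nsmul_right h c)

theorem le_nsmul_map_sum {ι : Type*} {s : Finset ι} {f : ι → R} {c : ℕ} {t : WithTop ℤ}
    (ht : t ≤ 0) (h : ∀ i ∈ s, t ≤ c • v (f i)) : t ≤ c • v (∑ i ∈ s, f i) :=
  Finset.sum_induction f (fun x => t ≤ c • v x) (fun _ _ => v.le_nsmul_map_add)
    (by rw [v.map_zero]; exact ht.trans (nsmul_nonneg le_top c)) h

theorem map_prod {ι : Type*} (s : Finset ι) (f : ι → R) :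
    v (∏ i ∈ s, f i) = ∑ i ∈ s, v (f i) := by
  classical
  induction s using Finset.induction_on with
  | empty => simp [v.map_one]
  | insert a s ha ih => rw [Finset.prod_insert ha, v.map_mul, ih, Finset.sum_insert ha]

open MvPolynomial in
theorem neg_le_nsmul_map_aeval {ι : Type*} {φ : MvPolynomial ι ℤ} {w : ι → ℕ} {m : ℕ}
    (hφ : φ.IsWeightedHomogeneous w m) {c B : ℕ} {g : ι → R}
    (hg : ∀ i, ((-(B * w i : ℕ) : ℤ) : WithTop ℤ) ≤ c • v (g i)) :
    ((-(B * m : ℕ) : ℤ) : WithTop ℤ) ≤ c • v (aeval g φ) := by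
  rw [aeval_def, eval₂_eq]
  refine v.le_nsmul_map_sum (by norm_cast; omega) fun d hd => ?_
  have hm : m = ∑ i ∈ d.support, d i * w i := by
    rw [← hφ (mem_support_iff.mp hd), Finsupp.weight_apply, Finsupp.sum]
    rfl
  calc ((-(B * m : ℕ) : ℤ) : WithTop ℤ)
      = 0 + ∑ i ∈ d.support, d i • ((-(B * w i : ℕ) : ℤ) : WithTop ℤ) := by
        have hsum :
            (-(B * m : ℕ) : ℤ) = ∑ i ∈ d.support, d i • (-(B * w i : ℕ) : ℤ) := by
          simp only [hm, Finset.mul_sum, Nat.cast_sum, ← Finset.sum_neg_distrib, nsmul_eq_mul]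
          exact Finset.sum_congr rfl fun i _ => by push_cast; ring
        rw [zero_add, hsum, WithTop.coe_sum]
        simp only [WithTop.coe_nsmul]
    _ ≤ c • v (algebraMap ℤ R (coeff d φ)) + ∑ i ∈ d.support, d i • (c • v (g i)) :=
        add_le_add (nsmul_nonneg (by simpa using v.map_intCast_nonneg _) c)
          (Finset.sum_le_sum fun i _ => nsmul_le_nsmul_right (hg i) _)
    _ = c • v (algebraMap ℤ R (coeff d φ) * ∏ i ∈ d.support, g i ^ d i) := by
        rw [v.map_mul, v.map_prod, nsmul_add, Finset.smul_sum]
        simp only [v.map_pow, smul_comm c]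

variable (p : ℕ) [Fact p.Prime]

theorem neg_natCast_le_nsmul_map_zero (k c : ℕ) : ((-k : ℤ) : WithTop ℤ) ≤ c • v 0 := by
  rw [v.map_zero]
  exact le_trans (by norm_cast; omega) (nsmul_nonneg le_top c)

/-- For `c = p ^ (n - 1)` and `B = r`, the condition on the first `n` coefficients is the one
defining `fil^log_r Wₙ`. -/
def wittFil (c B : ℕ) : AddSubgroup (WittVector p R) where
  carrier := {x | ∀ l, ((-(B * p ^ l : ℕ) : ℤ) : WithTop ℤ) ≤ c • v (x.coeff l)}
  zero_mem' l := by
    rw [zero_coeff]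
    exact v.neg_natCast_le_nsmul_map_zero _ c
  add_mem' {x y} hx hy l := by
    rw [add_coeff]
    refine v.neg_le_nsmul_map_aeval (wittAdd_isWeightedHomogeneous p l) ?_
    rintro ⟨i, k⟩
    fin_cases i
    exacts [hx k, hy k]
  neg_mem' {x} hx l := by
    rw [neg_coeff]
    refine v.neg_le_nsmul_map_aeval (wittNeg_isWeightedHomogeneous p l) ?_
    rintro ⟨i, k⟩
    fin_cases i
    exact hx k

variable {v p}

theorem mem_wittFil_one_zero {x : WittVector p R} :
    x ∈ v.wittFil p 1 0 ↔ ∀ l, 0 ≤ v (x.coeff l) := by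
  simp [wittFil]

theorem teichmuller_mem_wittFil {c B : ℕ} {u : R}
    (hu : ((-B : ℤ) : WithTop ℤ) ≤ c • v u) : teichmuller p u ∈ v.wittFil p c B := by
  rintro (_ | l)
  · simpa [teichmuller_coeff_zero] using hu
  · rw [teichmuller_coeff_pos p u _ l.succ_pos]
    exact v.neg_natCast_le_nsmul_map_zero _ c

theorem verschiebung_mem_wittFil_iff {c B : ℕ} {x : WittVector p R} :
    verschiebung x ∈ v.wittFil p c B ↔ x ∈ v.wittFil p c (B * p) := by
  refine ⟨fun h l => ?_, fun h l => ?_⟩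
  · simpa [verschiebung_coeff_succ, pow_succ, mul_assoc, mul_comm p] using h (l + 1)
  · rcases l with _ | l
    · rw [verschiebung_coeff_zero]
      exact v.neg_natCast_le_nsmul_map_zero _ c
    · simpa [verschiebung_coeff_succ, pow_succ, mul_assoc, mul_comm p] using h l

end AddValuation

theorem AddSubmonoid.exists_fin_sum_of_mem_closure {M : Type*} [AddCommMonoid M] {s : Set M}
    {x : M} (hx : x ∈ AddSubmonoid.closure s) :
    ∃ (N : ℕ) (f : Fin N → M), (∀ α, f α ∈ s) ∧ x = ∑ α, f α := by
  obtain ⟨l, hl, rfl⟩ := AddSubmonoid.exists_list_of_mem_closure hx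
  exact ⟨l.length, l.get, fun α => hl _ (l.get_mem α),
    by rw [← Fin.sum_ofFn, List.ofFn_get]⟩

namespace WittVector

variable {p : ℕ} [Fact p.Prime] {R : Type*} [CommRing R]

theorem exists_mem_closure_teichmuller_coeff_zero_eq {S : Set R} {s : R}
    (hs : s ∈ AddSubmonoid.closure S) :
    ∃ t ∈ AddSubmonoid.closure (teichmuller p '' S), t.coeff 0 = s := by
  have himage :
      (constantCoeff : WittVector p R →+* R).toAddMonoidHom '' (teichmuller p '' S) = S := by
    rw [Set.image_image]
    simp [teichmuller_coeff_zero]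
  rw [← himage, ← AddMonoidHom.map_mclosure] at hs
  obtain ⟨t, ht, rfl⟩ := hs
  exact ⟨t, ht, rfl⟩

theorem truncate_verschiebung_eq {n : ℕ} {x y : WittVector p R}
    (h : truncate n x = truncate n y) :
    truncate (n + 1) (verschiebung x) = truncate (n + 1) (verschiebung y) := by
  ext ⟨_ | i, hi⟩
  · simp only [coeff_truncate, verschiebung_coeff_zero]
  · simpa [coeff_truncate, verschiebung_coeff_succ] using
      congrArg (fun z => TruncatedWittVector.coeff ⟨i, by omega⟩ z) h

theorem truncate_out {n : ℕ} (x : TruncatedWittVector p n R) : truncate n x.out = x := by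
  ext i
  rw [coeff_truncate, TruncatedWittVector.coeff_out]

theorem truncate_iterate_verschiebung_teichmuller {L : Type} [Field L] {n j : ℕ} (hj : j ≤ n)
    (u : L) :
    truncate n (verschiebung^[j] (teichmuller p u)) = wVit (wT p (n - j) u) := by
  ext ⟨i, hi⟩
  simp only [coeff_truncate, wVit, wT, TruncatedWittVector.coeff_mk, Nat.sub_sub_self hj]
  rcases lt_or_ge i j with hij | hij
  · rw [iterate_verschiebung_coeff_eq_zero _ hij, dif_neg (by omega)]
  · obtain ⟨k, rfl⟩ := Nat.exists_eq_add_of_le' hij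
    rw [iterate_verschiebung_coeff, dif_pos (by omega)]
    simp only [Nat.add_sub_cancel]
    rcases k with _ | k
    · simp [teichmuller_coeff_zero]
    · simp [teichmuller_coeff_pos p u _ k.succ_pos]

end WittVector

namespace DVField

open WittVector

variable {L : Type} [Field L] (D : DVField L)

theorem v_one : D.v 1 = 0 := by
  obtain ⟨m, hm⟩ := WithTop.ne_top_iff_exists.mp fun h => one_ne_zero ((D.v_top 1).1 h)
  have h := D.v_mul 1 1
  rw [one_mul, ← hm] at h
  rw [← hm]
  norm_cast at h ⊢
  omega

def val : AddValuation L (WithTop ℤ) :=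
  AddValuation.of D.v ((D.v_top 0).2 rfl) D.v_one D.v_add D.v_mul

@[simp]
theorem val_apply (x : L) : D.val x = D.v x := rfl

theorem v_z_zpow (i : ℤ) : D.v (D.z ^ i) = i := by
  rcases i with n | n
  · rw [Int.ofNat_eq_natCast, zpow_natCast, ← val_apply, D.val.map_pow, val_apply, D.v_z]
    simp
  · rw [zpow_negSucc, ← val_apply, D.val.map_inv, D.val.map_pow, val_apply, D.v_z]
    simp [Int.negSucc_eq]

def polarMonomials (K : Subfield L) (t : WithTop ℤ) : Set L :=
  {y | ∃ μ ∈ K, ∃ i : ℤ, t ≤ i ∧ i < 0 ∧ y = μ * D.z ^ i}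

variable {D} {K : Subfield L}

theorem exists_mem_closure_sub_nonneg_of_neg_le (hK : D.IsCoeffField K) (k : ℕ) :
    ∀ x : L, ((-k : ℤ) : WithTop ℤ) ≤ D.v x →
      ∃ s ∈ AddSubmonoid.closure (D.polarMonomials K ((-k : ℤ) : WithTop ℤ)),
        0 ≤ D.v (x - s) := by
  induction k with
  | zero => exact fun x hx => ⟨0, zero_mem _, by simpa using hx⟩
  | succ k ih =>
    intro x hx
    have hz : D.z ≠ 0 := fun h => by simpa [h, (D.v_top 0).2 rfl] using D.v_z
    -- `μ₀` is the leading coefficient of `x`: `x * z ^ (k + 1) ≡ μ₀` modulo `𝔪`.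
    obtain ⟨μ₀, hμ₀, hlead⟩ := hK.2 (x * D.z ^ ((k : ℤ) + 1)) <| by
      rw [D.v_mul, v_z_zpow]
      calc (0 : WithTop ℤ) = ((-(k + 1 : ℕ) : ℤ) : WithTop ℤ) + ((k : ℤ) + 1 : ℤ) := by
            norm_cast; omega
        _ ≤ D.v x + ((k : ℤ) + 1 : ℤ) := add_le_add_left hx _
    have hrest : ((-k : ℤ) : WithTop ℤ) ≤ D.v (x - μ₀ * D.z ^ (-(k : ℤ) - 1)) := by
      have hx' : x - μ₀ * D.z ^ (-(k : ℤ) - 1)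
          = (x * D.z ^ ((k : ℤ) + 1) - μ₀) * D.z ^ (-(k : ℤ) - 1) := by
        rw [sub_mul, mul_assoc, ← zpow_add₀ hz]
        ring_nf
        rw [zpow_zero, mul_one]
      rw [hx', D.v_mul, v_z_zpow]
      calc ((-k : ℤ) : WithTop ℤ)
          = ((1 : ℤ) : WithTop ℤ) + ((-(k : ℤ) - 1 : ℤ) : WithTop ℤ) := by
            norm_cast; omega
        _ ≤ _ := add_le_add_left (by exact_mod_cast hlead) _
    obtain ⟨s, hs, hxs⟩ := ih _ hrest
    have hlead_mem :
        μ₀ * D.z ^ (-(k : ℤ) - 1) ∈ D.polarMonomials K ((-(k + 1 : ℕ) : ℤ) : WithTop ℤ) :=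
      ⟨μ₀, hμ₀, _, by norm_cast; omega, by omega, rfl⟩
    refine ⟨μ₀ * D.z ^ (-(k : ℤ) - 1) + s, add_mem (AddSubmonoid.subset_closure hlead_mem)
      (AddSubmonoid.closure_mono ?_ hs), ?_⟩
    · rintro _ ⟨μ, hμ, i, hki, hi, rfl⟩
      exact ⟨μ, hμ, i, le_trans (by norm_cast; omega) hki, hi, rfl⟩
    · rwa [← sub_sub]

theorem exists_mem_closure_sub_nonneg (hK : D.IsCoeffField K) (x : L) :
    ∃ s ∈ AddSubmonoid.closure (D.polarMonomials K (D.v x)), 0 ≤ D.v (x - s) := by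
  by_cases hx : x = 0
  · exact ⟨0, zero_mem _, by simp [hx, (D.v_top 0).2 rfl]⟩
  obtain ⟨m, hm⟩ := WithTop.ne_top_iff_exists.mp fun h => hx ((D.v_top x).1 h)
  obtain ⟨s, hs, hxs⟩ := exists_mem_closure_sub_nonneg_of_neg_le hK (-m).toNat x
    (by rw [← hm]; exact_mod_cast (by omega))
  refine ⟨s, AddSubmonoid.closure_mono ?_ hs, hxs⟩
  rintro _ ⟨μ, hμ, i, hki, hi, rfl⟩
  have hki : -((-m).toNat : ℤ) ≤ i := by exact_mod_cast hki
  exact ⟨μ, hμ, i, by rw [← hm]; exact_mod_cast (by omega), hi, rfl⟩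

variable (D) (p : ℕ) [Fact p.Prime]

/-- The summands `V^j [μ z^i]` of the decomposition; for `c = p ^ (n - 1)` and `B = r` the
bound `-B p^j ≤ c i` is the condition `-r ≤ i p^(n-1-j)` of the theorem. -/
def polarTerms (K : Subfield L) (n c B : ℕ) : Set (WittVector p L) :=
  {x | ∃ μ ∈ K, ∃ j < n, ∃ i : ℤ, -((B * p ^ j : ℕ) : ℤ) ≤ c * i ∧ i < 0 ∧
    x = verschiebung^[j] (teichmuller p (μ * D.z ^ i))}

variable {D p} {n c B : ℕ}

theorem verschiebung_mem_closure_polarTerms {x : WittVector p L}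
    (hx : x ∈ AddSubmonoid.closure (D.polarTerms p K n c (B * p))) :
    verschiebung x ∈ AddSubmonoid.closure (D.polarTerms p K (n + 1) c B) := by
  have hmap := AddSubmonoid.mem_map_of_mem (verschiebung : WittVector p L →+ WittVector p L) hx
  rw [AddMonoidHom.map_mclosure] at hmap
  refine AddSubmonoid.closure_mono ?_ hmap
  rintro _ ⟨_, ⟨μ, hμ, j, hj, i, hi, hi0, rfl⟩, rfl⟩
  refine ⟨μ, hμ, j + 1, by omega, i, ?_, hi0, (Function.iterate_succ_apply' _ _ _).symm⟩
  simpa [pow_succ, mul_assoc, mul_comm p] using hi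

theorem image_teichmuller_subset (hK : D.IsCoeffField K) {X : WittVector p L}
    (hX : X ∈ D.val.wittFil p c B) :
    teichmuller p '' D.polarMonomials K (D.v (X.coeff 0)) ⊆
      D.polarTerms p K (n + 1) c B ∩ D.val.wittFil p c B := by
  rintro _ ⟨_, ⟨μ, hμ, i, hXi, hi, rfl⟩, rfl⟩
  have hBi : ((-B : ℤ) : WithTop ℤ) ≤ c • (i : WithTop ℤ) := by
    simpa using (hX 0).trans (nsmul_le_nsmul_right hXi c)
  refine ⟨⟨μ, hμ, 0, n.succ_pos, i, ?_, hi, rfl⟩, AddValuation.teichmuller_mem_wittFil ?_⟩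
  · rw [← WithTop.coe_nsmul, WithTop.coe_le_coe, nsmul_eq_mul] at hBi
    simpa using hBi
  · refine hBi.trans (nsmul_le_nsmul_right ?_ c)
    rw [val_apply, D.v_mul, v_z_zpow]
    exact le_add_of_nonneg_left (hK.1 μ hμ)

theorem exists_truncate_eq_add_mem_closure_polarTerms (hK : D.IsCoeffField K) :
    ∀ (n B : ℕ) (X : WittVector p L), X ∈ D.val.wittFil p c B →
      ∃ b ∈ D.val.wittFil p 1 0, ∃ s ∈ AddSubmonoid.closure (D.polarTerms p K n c B),
        truncate n X = truncate n (b + s) := by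
  intro n
  induction n with
  | zero =>
    exact fun _ _ _ => ⟨0, zero_mem _, 0, zero_mem _, TruncatedWittVector.ext (·.elim0)⟩
  | succ n ih =>
    intro B X hX
    obtain ⟨s₀, hs₀, hint⟩ := exists_mem_closure_sub_nonneg hK (X.coeff 0)
    obtain ⟨t, ht, ht₀⟩ := exists_mem_closure_teichmuller_coeff_zero_eq (p := p) hs₀
    have hsub := image_teichmuller_subset (n := n) hK hX
    have htFil : t ∈ D.val.wittFil p c B :=
      (AddSubmonoid.closure_le (S := (D.val.wittFil p c B).toAddSubmonoid)).2
        (fun _ hy => (hsub hy).2) ht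
    have htPol : t ∈ AddSubmonoid.closure (D.polarTerms p K (n + 1) c B) :=
      AddSubmonoid.closure_mono (fun _ hy => (hsub hy).1) ht
    set T := teichmuller p (X.coeff 0 - s₀) + t with hTdef
    have hT : T ∈ D.val.wittFil p c B := add_mem (AddValuation.teichmuller_mem_wittFil
      (le_trans (by norm_cast; omega) (nsmul_nonneg hint c))) htFil
    have hVY : X - T = verschiebung ((X - T).shift 1) := eq_iterate_verschiebung (n := 1) <| by
      intro i hi
      obtain rfl : i = 0 := by omega
      rw [← constantCoeff_apply, map_sub, map_add]
      simp [ht₀, teichmuller_coeff_zero]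
    obtain ⟨b, hb, s, hs, htr⟩ := ih (B * p) ((X - T).shift 1)
      (AddValuation.verschiebung_mem_wittFil_iff.1 (hVY ▸ sub_mem hX hT))
    refine ⟨teichmuller p (X.coeff 0 - s₀) + verschiebung b,
      add_mem (AddValuation.teichmuller_mem_wittFil (by simpa using hint))
        (AddValuation.verschiebung_mem_wittFil_iff.2 (by simpa using hb)),
      t + verschiebung s, add_mem htPol (verschiebung_mem_closure_polarTerms hs), ?_⟩
    calc truncate (n + 1) X
        = truncate (n + 1) T + truncate (n + 1) (verschiebung ((X - T).shift 1)) := by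
          rw [← hVY, ← map_add, add_sub_cancel]
      _ = truncate (n + 1) (T + verschiebung (b + s)) := by
          rw [truncate_verschiebung_eq htr, ← map_add]
      _ = _ := by rw [map_add verschiebung, hTdef, add_add_add_comm]

theorem out_mem_wittFil_of_mem_filLog {r : ℕ} {a : TruncatedWittVector p n L}
    (ha : a ∈ D.filLog p r n) : a.out ∈ D.val.wittFil p (p ^ (n - 1)) r := by
  intro l
  by_cases hl : l < n
  · rw [show a.out.coeff l = a.coeff ⟨l, hl⟩ from TruncatedWittVector.coeff_out a ⟨l, hl⟩]
    have h := nsmul_le_nsmul_right (ha ⟨l, hl⟩) (p ^ l)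
    rw [smul_smul, ← pow_add, Nat.add_sub_cancel' (by omega : l ≤ n - 1),
      ← WithTop.coe_nsmul] at h
    simpa [mul_comm] using h
  · simp only [TruncatedWittVector.out, dif_neg hl]
    exact D.val.neg_natCast_le_nsmul_map_zero _ _

end DVField

theorem statement7_general (p : ℕ) [Fact p.Prime] (L : Type) [Field L]
    (D : DVField L) (K : Subfield L) (hK : D.IsCoeffField K)
    (r n : ℕ)
    (a : TruncatedWittVector p n L) (ha : a ∈ D.filLog p r n) :
    ∃ b ∈ D.WO p n, ∃ (N : ℕ) (μ : Fin N → L) (j : Fin N → ℕ) (i : Fin N → ℤ),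
      (∀ α, μ α ∈ K) ∧ (∀ α, j α ≤ n - 1) ∧
      (∀ α, -(r : ℤ) ≤ i α * (p : ℤ) ^ (n - 1 - j α) ∧ i α * (p : ℤ) ^ (n - 1 - j α) < 0) ∧
      a = b + ∑ α : Fin N,
        (wVit (wT p (n - j α) (μ α * D.z ^ (i α))) : TruncatedWittVector p n L) := by
  obtain ⟨b, hb, s, hs, htr⟩ :=
    DVField.exists_truncate_eq_add_mem_closure_polarTerms hK n r a.out
      (DVField.out_mem_wittFil_of_mem_filLog ha)
  obtain ⟨N, f, hf, rfl⟩ := AddSubmonoid.exists_fin_sum_of_mem_closure hs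
  choose μ hμ j hj i hi hi0 hf using hf
  have hp : 0 < (p : ℤ) := by exact_mod_cast (Fact.out : p.Prime).pos
  refine ⟨WittVector.truncate n b,
    fun l => by simpa using AddValuation.mem_wittFil_one_zero.1 hb l,
    N, μ, j, i, hμ, fun α => by have := hj α; omega,
    fun α => ⟨?_, mul_neg_of_neg_of_pos (hi0 α) (pow_pos hp _)⟩, ?_⟩
  · have h := hi α
    rw [show n - 1 = j α + (n - 1 - j α) by have := hj α; omega, pow_add] at h
    push_cast at h
    exact le_of_mul_le_mul_left (by linarith) (pow_pos hp (j α))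
  · rw [← WittVector.truncate_out a, htr, map_add, map_sum]
    congr 1
    refine Finset.sum_congr rfl fun α _ => ?_
    rw [hf α, WittVector.truncate_iterate_verschiebung_teichmuller (by have := hj α; omega)]

/-- (Explicit presentation of the Brylinski–Kato filtration modulo integral
Witt vectors.)  If `O` admits a coefficient field `K ⊆ O`, then for every `r ≥ 1` and `n ≥ 1`,
every `a ∈ fil^log_r Wₙ(L)` can be written as `a = b + Σ_α V^{j_α}([μ_α · z^{i_α}])` with
`b ∈ Wₙ(O)`, `μ_α ∈ K`, `0 ≤ j_α ≤ n-1` and `-r ≤ i_α · p^{n-1-j_α} < 0`. -/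
theorem statement7 (p : ℕ) [Fact p.Prime] (L : Type) [Field L] [CharP L p]
    (D : DVField L) (K : Subfield L) (hK : D.IsCoeffField K)
    (r n : ℕ) (hr : 1 ≤ r) (hn : 1 ≤ n)
    (a : TruncatedWittVector p n L) (ha : a ∈ D.filLog p r n) :
    ∃ b ∈ D.WO p n, ∃ (N : ℕ) (μ : Fin N → L) (j : Fin N → ℕ) (i : Fin N → ℤ),
      (∀ α, μ α ∈ K) ∧ (∀ α, j α ≤ n - 1) ∧
      (∀ α, -(r : ℤ) ≤ i α * (p : ℤ) ^ (n - 1 - j α) ∧ i α * (p : ℤ) ^ (n - 1 - j α) < 0) ∧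
      a = b + ∑ α : Fin N,
        (wVit (wT p (n - j α) (μ α * D.z ^ (i α))) : TruncatedWittVector p n L) :=
  statement7_general p L D K hK r n a ha
end
end
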